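/- Let c > 0 and let X be a random variable with density f_c(ρ) = (c/(2√π))·ρ^{−3/2}·exp(−c²/(4ρ)) on (0,∞); let h and h̃ be exponential random variables with rate λ > 0, with X, h, h̃ mutually independent. Let d, σ², τ_B, τ_H, δ, β > 0, μ > 0, 0 < ϱ < 1, 0 < ω < 1, ρ_B > 0, ρ_H > 0, and set a = ρ_B/(βϱ), b = ρ_H/(ωβ), ν_B = δ·X·(1−ϱ)·h/(d^μ σ²), and ν_H = ((ωβX − ρ_H)/(1−ω))·h̃·d^{−μ}/σ² on the event ωβX > ρ_H. Define C_PTP = P[X ≤ b]·P[ν_B > τ_B and βϱX > ρ_B] + P[X > b]·P[ν_H > τ_H and ωβX > ρ_H]. Then C_PTP = erfc(c/(2√b))·∫_a^∞ exp(−λ τ_B d^μ σ²/(δρ(1−ϱ)))·f_c(ρ) dρ + (1 − erfc(c/(2√b)))·∫_b^∞ exp(−λ τ_H d^μ σ² (1−ω)/(ωβρ − ρ_H))·f_c(ρ) dρ. -/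

import Mathlib

open MeasureTheory ProbabilityTheory Set

/-- The complementary error function `erfc(x) = (2/√π)·∫_x^∞ exp(−t²) dt`. -/
noncomputable def erfc (x : ℝ) : ℝ :=
  (2 / Real.sqrt Real.pi) * ∫ t in Ioi x, Real.exp (-t ^ 2)

/-- The Lévy-type density on `(0,∞)`: `f_c(ρ) = (c/(2√π))·ρ^{−3/2}·exp(−c²/(4ρ))`. -/
noncomputable def levyDensity (c ρ : ℝ) : ℝ :=
  c / (2 * Real.sqrt Real.pi) * ρ ^ (-(3 : ℝ) / 2) * Real.exp (-(c ^ 2 / (4 * ρ)))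

/-!
Conditioning on the incident power `X` and using that the fading gain `Y` is exponential and
independent of `X`, a coverage event of the form `{t < X, s(X) < Y}` (the SNR condition solved
for the gain) has probability `∫_t^∞ exp(-λ s(ρ)) f_c(ρ) dρ`. The switching probability
`P[X ≤ b]` is the Lévy CDF: the substitution `ρ = c²/(4t²)` maps `(c/(2√b), ∞)` onto `(0, b)` and
turns `f_c(ρ) dρ` into `(2/√π) exp(-t²) dt`, giving `erfc(c/(2√b))`.
-/

open Real

lemma expMeasure_Ioi {r s : ℝ} (hr : 0 < r) (hs : 0 ≤ s) :
    expMeasure r (Ioi s) = ENNReal.ofReal (exp (-(r * s))) := by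
  have := isProbabilityMeasure_expMeasure hr
  rw [← ofReal_measureReal, ← compl_Iic, probReal_compl_eq_one_sub measurableSet_Iic,
    ← cdf_eq_real, cdf_expMeasure_eq hr, if_pos hs, sub_sub_cancel]

theorem ProbabilityTheory.IndepFun.measure_mem_and_lt_eq_lintegral {Ω : Type*}
    [MeasurableSpace Ω] {P : Measure Ω} [IsFiniteMeasure P] {X Y : Ω → ℝ} (hXY : IndepFun X Y P)
    (hX : Measurable X) (hY : Measurable Y) {A : Set ℝ} (hA : MeasurableSet A) {s : ℝ → ℝ}
    (hs : Measurable s) :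
    P {ω | X ω ∈ A ∧ s (X ω) < Y ω} = ∫⁻ ρ in A, P.map Y (Ioi (s ρ)) ∂(P.map X) := by
  let S : Set (ℝ × ℝ) := {p | p.1 ∈ A ∧ s p.1 < p.2}
  have hS : MeasurableSet S :=
    (measurable_fst hA).inter (measurableSet_lt (hs.comp measurable_fst) measurable_snd)
  have hslice (ρ : ℝ) :
      P.map Y (Prod.mk ρ ⁻¹' S) = A.indicator (fun ρ => P.map Y (Ioi (s ρ))) ρ := by
    by_cases hρ : ρ ∈ A <;> simp [S, hρ, Ioi_def]
  calc P {ω | X ω ∈ A ∧ s (X ω) < Y ω} = P.map (fun ω => (X ω, Y ω)) S := by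
        rw [Measure.map_apply (hX.prodMk hY) hS]; rfl
    _ = ((P.map X).prod (P.map Y)) S := by
        rw [hXY.map_prod_eq_prod_map_map hX.aemeasurable hY.aemeasurable]
    _ = ∫⁻ ρ in A, P.map Y (Ioi (s ρ)) ∂(P.map X) := by
        rw [Measure.prod_apply hS]; simp_rw [hslice]; rw [lintegral_indicator hA]

lemma toReal_setLIntegral_withDensity_ofReal {α : Type*} [MeasurableSpace α] {ν : Measure α}
    {f g : α → ℝ} (hf : Measurable f) (hg : Measurable g) (hf0 : ∀ᵐ x ∂ν, 0 ≤ f x)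
    {A : Set α} (hA : MeasurableSet A) (hg0 : ∀ x ∈ A, 0 ≤ g x) :
    (∫⁻ x in A, ENNReal.ofReal (g x) ∂(ν.withDensity fun x => ENNReal.ofReal (f x))).toReal =
      ∫ x in A, g x * f x ∂ν := by
  rw [setLIntegral_withDensity_eq_setLIntegral_mul _ hf.ennreal_ofReal hg.ennreal_ofReal hA,
    integral_eq_lintegral_of_nonneg_ae (f := fun x => g x * f x) _
      (hg.mul hf).aestronglyMeasurable]
  · congr 1
    refine setLIntegral_congr_fun hA fun x hx => ?_
    rw [Pi.mul_apply, mul_comm, ENNReal.ofReal_mul (hg0 x hx)]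
  · filter_upwards [ae_restrict_of_ae hf0, ae_restrict_mem hA] with x hfx hx
    exact mul_nonneg (hg0 x hx) hfx

lemma toReal_withDensity_ofReal_apply {α : Type*} [MeasurableSpace α] {ν : Measure α}
    {f : α → ℝ} (hf : Measurable f) (hf0 : ∀ᵐ x ∂ν, 0 ≤ f x) {A : Set α} (hA : MeasurableSet A) :
    (ν.withDensity (fun x => ENNReal.ofReal (f x)) A).toReal = ∫ x in A, f x ∂ν := by
  simpa using toReal_setLIntegral_withDensity_ofReal hf measurable_const hf0 hA
    (fun _ _ => zero_le_one)

section DensityOnPositiveReals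

variable {Ω : Type*} [MeasurableSpace Ω] {P : Measure Ω} {X : Ω → ℝ} {f : ℝ → ℝ}

lemma toReal_measure_le_eq_integral_Ioc (hX : Measurable X) (hf : Measurable f)
    (hf0 : ∀ᵐ ρ ∂(volume.restrict (Ioi 0)), 0 ≤ f ρ)
    (hXlaw : P.map X = (volume.restrict (Ioi 0)).withDensity fun ρ => ENNReal.ofReal (f ρ))
    (b : ℝ) :
    (P {ω | X ω ≤ b}).toReal = ∫ ρ in Ioc 0 b, f ρ := by
  rw [show {ω | X ω ≤ b} = X ⁻¹' Iic b from rfl, ← Measure.map_apply hX measurableSet_Iic, hXlaw,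
    toReal_withDensity_ofReal_apply hf hf0 measurableSet_Iic,
    Measure.restrict_restrict measurableSet_Iic, inter_comm, Ioi_inter_Iic]

lemma toReal_measure_lt_and_lt_eq_integral_Ioi [IsFiniteMeasure P] {Y : Ω → ℝ}
    (hX : Measurable X) (hY : Measurable Y) (hXY : IndepFun X Y P) (hf : Measurable f)
    (hf0 : ∀ᵐ ρ ∂(volume.restrict (Ioi 0)), 0 ≤ f ρ)
    (hXlaw : P.map X = (volume.restrict (Ioi 0)).withDensity fun ρ => ENNReal.ofReal (f ρ))
    {r : ℝ} (hr : 0 < r) (hYlaw : P.map Y = expMeasure r) {t : ℝ} (ht : 0 ≤ t) {s : ℝ → ℝ}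
    (hs : Measurable s) (hs0 : ∀ ρ, t < ρ → 0 ≤ s ρ) :
    (P {ω | t < X ω ∧ s (X ω) < Y ω}).toReal = ∫ ρ in Ioi t, exp (-(r * s ρ)) * f ρ := by
  change (P {ω | X ω ∈ Ioi t ∧ s (X ω) < Y ω}).toReal = _
  rw [hXY.measure_mem_and_lt_eq_lintegral hX hY measurableSet_Ioi hs,
    setLIntegral_congr_fun measurableSet_Ioi (g := fun ρ => ENNReal.ofReal (exp (-(r * s ρ))))
      (fun ρ hρ => by rw [hYlaw, expMeasure_Ioi hr (hs0 ρ hρ)]),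
    hXlaw, toReal_setLIntegral_withDensity_ofReal hf (by fun_prop) hf0 measurableSet_Ioi
      (fun _ _ => (exp_pos _).le),
    Measure.restrict_restrict measurableSet_Ioi, inter_eq_left.mpr (Ioi_subset_Ioi ht)]

end DensityOnPositiveReals

section LevyDensity

variable {c : ℝ}

lemma measurable_levyDensity (c : ℝ) : Measurable (levyDensity c) := by
  unfold levyDensity; fun_prop

lemma levyDensity_nonneg (hc : 0 ≤ c) {ρ : ℝ} (hρ : 0 < ρ) : 0 ≤ levyDensity c ρ := by
  unfold levyDensity; positivity

noncomputable def levySubst (c t : ℝ) : ℝ := c ^ 2 / (4 * t ^ 2)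

lemma bijOn_levySubst (hc : 0 < c) {b : ℝ} (hb : 0 < b) :
    BijOn (levySubst c) (Ioi (c / (2 * √b))) (Ioo 0 b) := by
  have hx₀ : 0 < c / (2 * √b) := by positivity
  refine InvOn.bijOn (f' := fun ρ => c / (2 * √ρ)) ⟨fun t ht => ?_, fun ρ hρ => ?_⟩
    (fun t ht => ?_) (fun ρ hρ => ?_)
  · have ht0 : 0 < t := hx₀.trans ht
    dsimp only [levySubst]
    rw [show c ^ 2 / (4 * t ^ 2) = (c / (2 * t)) ^ 2 by ring, sqrt_sq (by positivity)]
    field_simp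
  · have := sqrt_pos.mpr hρ.1
    simp only [levySubst, div_pow, mul_pow, sq_sqrt hρ.1.le]
    field_simp
    ring
  · have ht0 : 0 < t := hx₀.trans ht
    have hct : c < 2 * √b * t := (div_lt_iff₀' (by positivity)).mp ht
    refine ⟨by unfold levySubst; positivity, (div_lt_iff₀ (by positivity)).mpr ?_⟩
    nlinarith [sq_sqrt hb.le, sqrt_pos.mpr hb]
  · exact div_lt_div_of_pos_left hc (by simpa using hρ.1)
      (mul_lt_mul_of_pos_left (sqrt_lt_sqrt hρ.1.le hρ.2) two_pos)

lemma hasDerivAt_levySubst {t : ℝ} (ht : t ≠ 0) :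
    HasDerivAt (levySubst c) (-(c ^ 2 / 2 / t ^ 3)) t := by
  have h := (hasDerivAt_const t (c ^ 2)).fun_div ((hasDerivAt_pow 2 t).const_mul (4 : ℝ))
    (by positivity)
  refine h.congr_deriv ?_
  field_simp
  ring

lemma mul_levyDensity_levySubst (hc : 0 < c) {t : ℝ} (ht : 0 < t) :
    c ^ 2 / 2 / t ^ 3 * levyDensity c (levySubst c t) = 2 / √π * exp (-t ^ 2) := by
  have hsq : levySubst c t = (c / (2 * t)) ^ 2 := by unfold levySubst; ring
  have hrpow : levySubst c t ^ (-(3 : ℝ) / 2) = ((c / (2 * t)) ^ 3)⁻¹ := by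
    rw [hsq, ← rpow_natCast, ← rpow_mul (by positivity), ← rpow_natCast, ← rpow_neg (by positivity)]
    norm_num
  have harg : c ^ 2 / (4 * levySubst c t) = t ^ 2 := by unfold levySubst; field_simp
  have := sqrt_pos.mpr pi_pos
  unfold levyDensity
  rw [hrpow, harg]
  field_simp

lemma integral_Ioc_levyDensity (hc : 0 < c) {b : ℝ} (hb : 0 < b) :
    ∫ ρ in Ioc 0 b, levyDensity c ρ = erfc (c / (2 * √b)) := by
  have hx₀ : 0 < c / (2 * √b) := by positivity
  rw [integral_Ioc_eq_integral_Ioo, ← (bijOn_levySubst hc hb).image_eq,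
    integral_image_eq_integral_abs_deriv_smul measurableSet_Ioi
      (fun t ht => (hasDerivAt_levySubst (hx₀.trans ht).ne').hasDerivWithinAt)
      (bijOn_levySubst hc hb).injOn, erfc, ← integral_const_mul]
  refine setIntegral_congr_fun measurableSet_Ioi fun t ht => ?_
  have ht0 : 0 < t := hx₀.trans ht
  rw [smul_eq_mul, abs_neg, abs_of_pos (by positivity), mul_levyDensity_levySubst hc ht0]

end LevyDensity

lemma backscatter_snr_iff {δ ϱ β D σ2 τ ρB x y : ℝ} (hδ : 0 < δ) (hϱ0 : 0 < ϱ) (hϱ1 : ϱ < 1)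
    (hβ : 0 < β) (hD : 0 < D) (hσ2 : 0 < σ2) (hρB : 0 < ρB) :
    δ * x * (1 - ϱ) * y / (D * σ2) > τ ∧ β * ϱ * x > ρB ↔
      ρB / (β * ϱ) < x ∧ τ * D * σ2 / (δ * x * (1 - ϱ)) < y := by
  have hϱ : 0 < 1 - ϱ := sub_pos.mpr hϱ1
  rw [and_comm, gt_iff_lt, gt_iff_lt, div_lt_iff₀ (by positivity), mul_comm x]
  refine and_congr_right fun hx => ?_
  have : 0 < x := pos_of_mul_pos_right (hρB.trans hx) (by positivity)
  rw [lt_div_iff₀ (by positivity), div_lt_iff₀ (by positivity)]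
  constructor <;> intro <;> linarith

lemma harvest_snr_iff {ω β D σ2 τ ρH x y : ℝ} (hω0 : 0 < ω) (hω1 : ω < 1)
    (hβ : 0 < β) (hD : 0 < D) (hσ2 : 0 < σ2) :
    (ω * β * x - ρH) / (1 - ω) * y * D⁻¹ / σ2 > τ ∧ ω * β * x > ρH ↔
      ρH / (ω * β) < x ∧ τ * D * σ2 * (1 - ω) / (ω * β * x - ρH) < y := by
  have hω : 0 < 1 - ω := sub_pos.mpr hω1
  rw [and_comm, gt_iff_lt, gt_iff_lt, div_lt_iff₀ (by positivity), mul_comm x]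
  refine and_congr_right fun hx => ?_
  have hq : 0 < ω * β * x - ρH := by linarith
  rw [show (ω * β * x - ρH) / (1 - ω) * y * D⁻¹ / σ2 = y * (ω * β * x - ρH) / (1 - ω) / (D * σ2)
    by ring, lt_div_iff₀ (by positivity), lt_div_iff₀ hω, div_lt_iff₀ hq]
  constructor <;> intro <;> linarith

section Coverage

variable {Ω : Type*} [MeasurableSpace Ω] {P : Measure Ω} [IsFiniteMeasure P] {X Y : Ω → ℝ}
  {f : ℝ → ℝ} {r : ℝ}

lemma toReal_measure_backscatter_coverage (hX : Measurable X) (hY : Measurable Y)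
    (hXY : IndepFun X Y P) (hf : Measurable f) (hf0 : ∀ᵐ ρ ∂(volume.restrict (Ioi 0)), 0 ≤ f ρ)
    (hXlaw : P.map X = (volume.restrict (Ioi 0)).withDensity fun ρ => ENNReal.ofReal (f ρ))
    (hr : 0 < r) (hYlaw : P.map Y = expMeasure r) {δ ϱ β D σ2 τ ρB : ℝ} (hδ : 0 < δ)
    (hϱ0 : 0 < ϱ) (hϱ1 : ϱ < 1) (hβ : 0 < β) (hD : 0 < D) (hσ2 : 0 < σ2) (hτ : 0 ≤ τ)
    (hρB : 0 < ρB) :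
    (P {x | δ * X x * (1 - ϱ) * Y x / (D * σ2) > τ ∧ β * ϱ * X x > ρB}).toReal =
      ∫ ρ in Ioi (ρB / (β * ϱ)), exp (-(r * τ * D * σ2 / (δ * ρ * (1 - ϱ)))) * f ρ := by
  have hϱ : 0 < 1 - ϱ := sub_pos.mpr hϱ1
  have hs0 (ρ : ℝ) (hρ : ρB / (β * ϱ) < ρ) : 0 ≤ τ * D * σ2 / (δ * ρ * (1 - ϱ)) := by
    have := (div_pos hρB (mul_pos hβ hϱ0)).trans hρ
    positivity
  simp_rw [backscatter_snr_iff hδ hϱ0 hϱ1 hβ hD hσ2 hρB]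
  rw [toReal_measure_lt_and_lt_eq_integral_Ioi hX hY hXY hf hf0 hXlaw hr hYlaw (by positivity)
    (by fun_prop) hs0]
  simp only [mul_div_assoc', ← mul_assoc]

lemma toReal_measure_harvest_coverage (hX : Measurable X) (hY : Measurable Y)
    (hXY : IndepFun X Y P) (hf : Measurable f) (hf0 : ∀ᵐ ρ ∂(volume.restrict (Ioi 0)), 0 ≤ f ρ)
    (hXlaw : P.map X = (volume.restrict (Ioi 0)).withDensity fun ρ => ENNReal.ofReal (f ρ))
    (hr : 0 < r) (hYlaw : P.map Y = expMeasure r) {ω β D σ2 τ ρH : ℝ} (hω0 : 0 < ω)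
    (hω1 : ω < 1) (hβ : 0 < β) (hD : 0 < D) (hσ2 : 0 < σ2) (hτ : 0 ≤ τ) (hρH : 0 < ρH) :
    (P {x | (ω * β * X x - ρH) / (1 - ω) * Y x * D⁻¹ / σ2 > τ ∧ ω * β * X x > ρH}).toReal =
      ∫ ρ in Ioi (ρH / (ω * β)), exp (-(r * τ * D * σ2 * (1 - ω) / (ω * β * ρ - ρH))) * f ρ := by
  have hω : 0 < 1 - ω := sub_pos.mpr hω1
  have hs0 (ρ : ℝ) (hρ : ρH / (ω * β) < ρ) : 0 ≤ τ * D * σ2 * (1 - ω) / (ω * β * ρ - ρH) := by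
    have : 0 < ω * β * ρ - ρH := by rw [div_lt_iff₀ (by positivity)] at hρ; linarith
    positivity
  simp_rw [harvest_snr_iff hω0 hω1 hβ hD hσ2]
  rw [toReal_measure_lt_and_lt_eq_integral_Ioi hX hY hXY hf hf0 hXlaw hr hYlaw (by positivity)
    (by fun_prop) hs0]
  simp only [mul_div_assoc', ← mul_assoc]

end Coverage

theorem coverage_probability_PTP_general {Θ : Type*} [MeasurableSpace Θ]
    (P : Measure Θ) [IsProbabilityMeasure P]
    (c : ℝ) (hc : 0 < c) (X h ht : Θ → ℝ)
    (hXm : Measurable X) (hhm : Measurable h) (hhtm : Measurable ht)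
    (lam : ℝ) (hlam : 0 < lam)
    (hXlaw : Measure.map X P =
      (volume.restrict (Ioi (0 : ℝ))).withDensity fun ρ => ENNReal.ofReal (levyDensity c ρ))
    (hhlaw : Measure.map h P = expMeasure lam)
    (hhtlaw : Measure.map ht P = expMeasure lam)
    (hind : iIndepFun (m := fun _ : Fin 3 => (inferInstance : MeasurableSpace ℝ)) ![X, h, ht] P)
    (d σ2 τB τH δ β μ ϱ ω ρB ρH : ℝ)
    (hd : 0 < d) (hσ2 : 0 < σ2) (hτB : 0 < τB) (hτH : 0 < τH) (hδ : 0 < δ)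
    (hβ : 0 < β) (hϱ0 : 0 < ϱ) (hϱ1 : ϱ < 1)
    (hω0 : 0 < ω) (hω1 : ω < 1) (hρB : 0 < ρB) (hρH : 0 < ρH)
    (a b : ℝ) (hab : a = ρB / (β * ϱ)) (hbb : b = ρH / (ω * β)) :
    (P {x | X x ≤ b}).toReal *
          (P {x | δ * X x * (1 - ϱ) * h x / (d ^ μ * σ2) > τB ∧
                  β * ϱ * X x > ρB}).toReal +
        (P {x | X x > b}).toReal *
          (P {x | ((ω * β * X x - ρH) / (1 - ω)) * ht x * d ^ (-μ) / σ2 > τH ∧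
                  ω * β * X x > ρH}).toReal =
      erfc (c / (2 * Real.sqrt b)) *
          (∫ ρ in Ioi a,
            Real.exp (-(lam * τB * d ^ μ * σ2 / (δ * ρ * (1 - ϱ)))) * levyDensity c ρ) +
        (1 - erfc (c / (2 * Real.sqrt b))) *
          (∫ ρ in Ioi b,
            Real.exp (-(lam * τH * d ^ μ * σ2 * (1 - ω) / (ω * β * ρ - ρH))) *
              levyDensity c ρ) := by
  have hb : 0 < b := hbb ▸ by positivity
  have hD : 0 < d ^ μ := rpow_pos_of_pos hd μ
  have hf0 : ∀ᵐ ρ ∂(volume.restrict (Ioi 0)), 0 ≤ levyDensity c ρ :=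
    (ae_restrict_iff' measurableSet_Ioi).mpr (ae_of_all _ fun _ => levyDensity_nonneg hc.le)
  have hXh : IndepFun X h P := by simpa using hind.indepFun (show (0 : Fin 3) ≠ 1 by decide)
  have hXht : IndepFun X ht P := by simpa using hind.indepFun (show (0 : Fin 3) ≠ 2 by decide)
  have hcdf : (P {x | X x ≤ b}).toReal = erfc (c / (2 * √b)) := by
    rw [toReal_measure_le_eq_integral_Ioc hXm (measurable_levyDensity c) hf0 hXlaw,
      integral_Ioc_levyDensity hc hb]
  have hgt : (P {x | X x > b}).toReal = 1 - (P {x | X x ≤ b}).toReal := by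
    simpa [measureReal_def, compl_ofPred, not_le] using
      probReal_compl_eq_one_sub (μ := P) (s := {x | X x ≤ b}) (hXm measurableSet_Iic)
  rw [hgt, hcdf, rpow_neg hd.le, hab, hbb,
    toReal_measure_backscatter_coverage hXm hhm hXh (measurable_levyDensity c) hf0 hXlaw hlam
      hhlaw hδ hϱ0 hϱ1 hβ hD hσ2 hτB.le hρB,
    toReal_measure_harvest_coverage hXm hhtm hXht (measurable_levyDensity c) hf0 hXlaw hlam
      hhtlaw hω0 hω1 hβ hD hσ2 hτH.le hρH]

/-- Coverage probability under PTP (interference-free case) in the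
PPP/Rayleigh/μ=4 special case: with `X` of density `f_c` on `(0,∞)`, `h` and `h̃`
exponential with rate `λ`, `X, h, h̃` mutually independent, `a = ρ_B/(βϱ)`,
`b = ρ_H/(ωβ)`, `ν_B = δ·X·(1−ϱ)·h/(d^μ σ²)` and
`ν_H = ((ωβX − ρ_H)/(1−ω))·h̃·d^{−μ}/σ²`,
`C_PTP = P[X ≤ b]·P[ν_B > τ_B and βϱX > ρ_B] + P[X > b]·P[ν_H > τ_H and ωβX > ρ_H]
 = erfc(c/(2√b))·∫_a^∞ exp(−λτ_B d^μ σ²/(δρ(1−ϱ)))·f_c(ρ) dρ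
   + (1 − erfc(c/(2√b)))·∫_b^∞ exp(−λτ_H d^μ σ²(1−ω)/(ωβρ − ρ_H))·f_c(ρ) dρ`. -/
theorem coverage_probability_PTP {Θ : Type*} [MeasurableSpace Θ]
    (P : Measure Θ) [IsProbabilityMeasure P]
    (c : ℝ) (hc : 0 < c) (X h ht : Θ → ℝ)
    (hXm : Measurable X) (hhm : Measurable h) (hhtm : Measurable ht)
    (lam : ℝ) (hlam : 0 < lam)
    (hXlaw : Measure.map X P =
      (volume.restrict (Ioi (0 : ℝ))).withDensity fun ρ => ENNReal.ofReal (levyDensity c ρ))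
    (hhlaw : Measure.map h P = expMeasure lam)
    (hhtlaw : Measure.map ht P = expMeasure lam)
    (hind : iIndepFun (m := fun _ : Fin 3 => (inferInstance : MeasurableSpace ℝ)) ![X, h, ht] P)
    (d σ2 τB τH δ β μ ϱ ω ρB ρH : ℝ)
    (hd : 0 < d) (hσ2 : 0 < σ2) (hτB : 0 < τB) (hτH : 0 < τH) (hδ : 0 < δ)
    (hβ : 0 < β) (hμ : 0 < μ) (hϱ0 : 0 < ϱ) (hϱ1 : ϱ < 1)
    (hω0 : 0 < ω) (hω1 : ω < 1) (hρB : 0 < ρB) (hρH : 0 < ρH)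
    (a b : ℝ) (hab : a = ρB / (β * ϱ)) (hbb : b = ρH / (ω * β)) :
    (P {x | X x ≤ b}).toReal *
          (P {x | δ * X x * (1 - ϱ) * h x / (d ^ μ * σ2) > τB ∧
                  β * ϱ * X x > ρB}).toReal +
        (P {x | X x > b}).toReal *
          (P {x | ((ω * β * X x - ρH) / (1 - ω)) * ht x * d ^ (-μ) / σ2 > τH ∧
                  ω * β * X x > ρH}).toReal =
      erfc (c / (2 * Real.sqrt b)) *
          (∫ ρ in Ioi a,
            Real.exp (-(lam * τB * d ^ μ * σ2 / (δ * ρ * (1 - ϱ)))) * levyDensity c ρ) +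
        (1 - erfc (c / (2 * Real.sqrt b))) *
          (∫ ρ in Ioi b,
            Real.exp (-(lam * τH * d ^ μ * σ2 * (1 - ω) / (ω * β * ρ - ρH))) *
              levyDensity c ρ) :=
  coverage_probability_PTP_general P c hc X h ht hXm hhm hhtm lam hlam hXlaw hhlaw hhtlaw hind d σ2
    τB τH δ β μ ϱ ω ρB ρH hd hσ2 hτB hτH hδ hβ hϱ0 hϱ1 hω0 hω1 hρB hρH a b hab hbb
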